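/- arXiv:1208.1083 — 4 statements merged into one kernel-verified Lean document; each statement's English description precedes it below -/
import Mathlib

section
/- Let G be a group, let G(v) ≤ G be a subgroup, and let q ∈ G be an element with q^{-1} G(v) q ⊆ G(v) and q ∉ G(v)^+ ∩ (G(v)^+)^{-1}, where G(v)^+ denotes the submonoid of G generated by G(v) ∪ {q}. Then G(v)^+ = ⋃_{z ≥ 0} q^z G(v), and G(v)^+ ∩ (G(v)^+)^{-1} = G(v) provided q ∉ (G(v)^+)^{-1}. -/
/-- for a subgroup `H = G(v)` of a group `G` and `q ∈ G` with
`q⁻¹ H q ⊆ H` and `q ∉ G(v)⁺ ∩ (G(v)⁺)⁻¹`, where `M = G(v)⁺` is the submonoid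
generated by `H ∪ {q}`, one has `G(v)⁺ = ⋃_{z ≥ 0} q^z G(v)`, and
`G(v)⁺ ∩ (G(v)⁺)⁻¹ = G(v)` provided `q ∉ (G(v)⁺)⁻¹`. -/
theorem stmt2 {G : Type*} [Group G] (H : Subgroup G) (q : G)
    (hconj : ∀ h ∈ H, q⁻¹ * h * q ∈ H)
    (M : Submonoid G) (hM : M = Submonoid.closure ((H : Set G) ∪ {q}))
    (hq : q ∉ (M : Set G) ∩ (M : Set G)⁻¹) :
    ((M : Set G) = ⋃ z : ℕ, (fun g => q ^ z * g) '' (H : Set G)) ∧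
    (q ∉ (M : Set G)⁻¹ → (M : Set G) ∩ (M : Set G)⁻¹ = (H : Set G)) := by
  have hHM : (H : Set G) ⊆ (M : Set G) := by
    rw [hM]
    exact (Set.subset_union_left).trans Submonoid.subset_closure
  have hqM : q ∈ M := by
    rw [hM]
    exact Submonoid.subset_closure (Or.inr rfl)
  have conjn : ∀ (n : ℕ), ∀ h ∈ H, (q ^ n)⁻¹ * h * q ^ n ∈ H := by
    intro n
    induction n with
    | zero => simp
    | succ n ih =>
      intro h hh
      have h2 : q⁻¹ * ((q ^ n)⁻¹ * h * q ^ n) * q ∈ H := hconj _ (ih h hh)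
      simpa [pow_succ, mul_inv_rev, mul_assoc] using h2
  have key : (M : Set G) = ⋃ z : ℕ, (fun g => q ^ z * g) '' (H : Set G) := by
    apply Set.Subset.antisymm
    · intro x hx
      rw [hM] at hx
      induction hx using Submonoid.closure_induction with
      | mem g hg =>
        rcases hg with hg | hg
        · exact Set.mem_iUnion.2 ⟨0, ⟨g, hg, by simp⟩⟩
        · rcases hg with rfl
          exact Set.mem_iUnion.2 ⟨1, ⟨1, H.one_mem, by simp⟩⟩
      | one => exact Set.mem_iUnion.2 ⟨0, ⟨1, H.one_mem, by simp⟩⟩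
      | mul x y hx' hy' ihx ihy =>
        rcases Set.mem_iUnion.1 ihx with ⟨a, h1, hh1, rfl⟩
        rcases Set.mem_iUnion.1 ihy with ⟨b, h2, hh2, rfl⟩
        refine Set.mem_iUnion.2 ⟨a + b,
          ⟨((q ^ b)⁻¹ * h1 * q ^ b) * h2, H.mul_mem (conjn b h1 hh1) hh2, ?_⟩⟩
        simp [pow_add, mul_assoc]
    · intro x hx
      rcases Set.mem_iUnion.1 hx with ⟨z, h, hh, rfl⟩
      exact M.mul_mem (pow_mem hqM z) (hHM hh)
  refine ⟨key, fun hq2 => ?_⟩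
  apply Set.Subset.antisymm
  · rintro x ⟨hx1, hx2⟩
    rw [key] at hx1
    rcases Set.mem_iUnion.1 hx1 with ⟨a, h1, hh1, rfl⟩
    have hx2' : (q ^ a * h1)⁻¹ ∈ (M : Set G) := Set.mem_inv.1 hx2
    rw [key] at hx2'
    rcases Set.mem_iUnion.1 hx2' with ⟨b, h2, hh2, heq⟩
    -- q^b * h2 = (q^a * h1)⁻¹, so q^a * h1 * q^b * h2 = 1
    have hone : q ^ (a + b) * (((q ^ b)⁻¹ * h1 * q ^ b) * h2) = 1 := by
      have heq' : q ^ b * h2 = (q ^ a * h1)⁻¹ := heq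
      have : (q ^ a * h1) * (q ^ b * h2) = 1 := by
        rw [heq']; group
      calc q ^ (a + b) * (((q ^ b)⁻¹ * h1 * q ^ b) * h2)
          = (q ^ a * h1) * (q ^ b * h2) := by simp [pow_add, mul_assoc]
        _ = 1 := this
    have hqab : q ^ (a + b) ∈ H := by
      have : q ^ (a + b) = (((q ^ b)⁻¹ * h1 * q ^ b) * h2)⁻¹ := by
        rw [eq_inv_iff_mul_eq_one]; exact hone
      rw [this]
      exact H.inv_mem (H.mul_mem (conjn b h1 hh1) hh2)
    cases' Nat.eq_zero_or_pos (a + b) with hz hz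
    · have ha : a = 0 := Nat.eq_zero_of_add_eq_zero_right hz
      subst ha
      simpa using hh1
    · exfalso
      apply hq2
      rcases Nat.exists_eq_succ_of_ne_zero (Nat.pos_iff_ne_zero.1 hz) with ⟨n, hn⟩
      have hmem : q⁻¹ ∈ M := by
        have : q⁻¹ = q ^ n * (q ^ (a + b))⁻¹ := by
          simp [hn, pow_succ', mul_inv_rev, mul_assoc]
        rw [this]
        exact M.mul_mem (pow_mem hqM n) (hHM (H.inv_mem hqab))
      exact Set.mem_inv.2 hmem
  · intro h hh
    exact ⟨hHM hh, Set.mem_inv.2 (hHM (H.inv_mem hh))⟩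
end

section
/- Let G be a group, H ≤ G a subgroup, and q ∈ G with q^{-1} H q ⊆ H and q^{-1} ∉ H^+, where H^+ = ⋃_{z ≥ 0} q^z H is the submonoid generated by H and q. Define a relation on the coset space H\G of right cosets by Hg ≤ Hh if and only if h ∈ H^+ g. Then ≤ is a well-defined partial order on H\G. -/
private lemma stmt3_aux {G : Type*} [Group G] (H : Subgroup G) (q : G)
    (hconj : ∀ h ∈ H, q⁻¹ * h * q ∈ H)
    (M : Submonoid G) (hM : M = Submonoid.closure ((H : Set G) ∪ {q})) :
    ∀ x ∈ M, ∃ n : ℕ, ∃ h ∈ H, x = q ^ n * h := by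
  have hconjpow : ∀ m : ℕ, ∀ h ∈ H, (q ^ m)⁻¹ * h * q ^ m ∈ H := by
    intro m
    induction m with
    | zero => intro h hh; simpa using hh
    | succ m ih =>
      intro h hh
      have : (q ^ (m+1))⁻¹ * h * q ^ (m+1) = q⁻¹ * ((q ^ m)⁻¹ * h * q ^ m) * q := by
        rw [pow_succ]; group
      rw [this]
      exact hconj _ (ih h hh)
  subst hM
  intro x hx
  induction hx using Submonoid.closure_induction with
  | mem y hy =>
    rcases hy with hy | hy
    · exact ⟨0, y, hy, by simp⟩
    · exact ⟨1, 1, one_mem _, by simp [Set.mem_singleton_iff.mp hy]⟩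
  | one => exact ⟨0, 1, one_mem _, by simp⟩
  | mul a b _ _ ha hb =>
    rcases ha with ⟨n, h, hh, rfl⟩
    rcases hb with ⟨m, h', hh', rfl⟩
    refine ⟨n + m, ((q ^ m)⁻¹ * h * q ^ m) * h', mul_mem (hconjpow m h hh) hh', ?_⟩
    rw [pow_add]; group

/-- for a subgroup `H ≤ G` and `q ∈ G` with `q⁻¹ H q ⊆ H` and
`q⁻¹ ∉ H⁺`, where `H⁺` is the submonoid generated by `H ∪ {q}`, the relation
`Hg ≤ Hh ↔ h g⁻¹ ∈ H⁺` is a well-defined partial order on the right cosets: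
it is well defined on cosets, reflexive, transitive, and antisymmetric. -/
theorem stmt3 {G : Type*} [Group G] (H : Subgroup G) (q : G)
    (hconj : ∀ h ∈ H, q⁻¹ * h * q ∈ H)
    (M : Submonoid G) (hM : M = Submonoid.closure ((H : Set G) ∪ {q}))
    (hq : q⁻¹ ∉ M)
    (le : G → G → Prop) (hle : ∀ g h, le g h ↔ h * g⁻¹ ∈ M) :
    (∀ g g' h h', g' * g⁻¹ ∈ H → h' * h⁻¹ ∈ H → (le g h ↔ le g' h')) ∧
    (∀ g, le g g) ∧
    (∀ g h k, le g h → le h k → le g k) ∧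
    (∀ g h, le g h → le h g → h * g⁻¹ ∈ H) := by
  have hHM : ∀ h ∈ H, h ∈ M := fun h hh => by
    rw [hM]; exact Submonoid.subset_closure (Or.inl hh)
  have hqM : q ∈ M := by rw [hM]; exact Submonoid.subset_closure (Or.inr rfl)
  refine ⟨?_, ?_, ?_, ?_⟩
  · intro g g' h h' hg hh
    constructor
    · intro hgh
      rw [hle] at hgh ⊢
      have : h' * g'⁻¹ = (h' * h⁻¹) * (h * g⁻¹) * (g' * g⁻¹)⁻¹ := by group
      rw [this]
      exact mul_mem (mul_mem (hHM _ hh) hgh) (hHM _ (inv_mem hg))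
    · intro hgh
      rw [hle] at hgh ⊢
      have : h * g⁻¹ = (h' * h⁻¹)⁻¹ * (h' * g'⁻¹) * (g' * g⁻¹) := by group
      rw [this]
      exact mul_mem (mul_mem (hHM _ (inv_mem hh)) hgh) (hHM _ hg)
  · intro g; rw [hle]; simpa using one_mem M
  · intro g h k h1 h2
    rw [hle] at h1 h2 ⊢
    have : k * g⁻¹ = (k * h⁻¹) * (h * g⁻¹) := by group
    rw [this]; exact mul_mem h2 h1
  · intro g h h1 h2
    rw [hle] at h1 h2
    obtain ⟨n, a, ha, hna⟩ := stmt3_aux H q hconj M hM _ h1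
    obtain ⟨m, b, hb, hmb⟩ := stmt3_aux H q hconj M hM _ h2
    have hid : q ^ (n + m) * ((q ^ m)⁻¹ * a * q ^ m * b) = 1 := by
      have : (h * g⁻¹) * (g * h⁻¹) = 1 := by group
      rw [hna, hmb] at this
      rw [← this, pow_add]; group
    have hqnm : q ^ (n + m) ∈ H := by
      have hmemH : (q ^ m)⁻¹ * a * q ^ m * b ∈ H := by
        have hconjpow : ∀ k : ℕ, ∀ x ∈ H, (q ^ k)⁻¹ * x * q ^ k ∈ H := by
          intro k
          induction k with
          | zero => intro x hx; simpa using hx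
          | succ k ih =>
            intro x hx
            have : (q ^ (k+1))⁻¹ * x * q ^ (k+1) = q⁻¹ * ((q ^ k)⁻¹ * x * q ^ k) * q := by
              rw [pow_succ]; group
            rw [this]; exact hconj _ (ih x hx)
        exact mul_mem (hconjpow m a ha) hb
      have : q ^ (n + m) = ((q ^ m)⁻¹ * a * q ^ m * b)⁻¹ := by
        rw [eq_inv_iff_mul_eq_one]; exact hid
      rw [this]; exact inv_mem hmemH
    have hnm0 : n + m = 0 := by
      by_contra h0
      obtain ⟨k, hk⟩ := Nat.exists_eq_succ_of_ne_zero h0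
      apply hq
      have : q⁻¹ = q ^ k * (q ^ (n + m))⁻¹ := by
        rw [hk, pow_succ]; group
      rw [this]
      exact mul_mem (pow_mem hqM k) (hHM _ (inv_mem hqnm))
    have hn0 : n = 0 := Nat.eq_zero_of_add_eq_zero_right hnm0
    rw [hna, hn0]
    simpa using ha
end

section
/- Let M₁ = ℤ[x, x^{-1}, f_1^{-1}, ..., f_n^{-1}] ⊆ ℚ(x), where f_1, ..., f_n are distinct irreducible monic non-constant polynomials in ℤ[x], and let v = v_i be the f_i-adic valuation on ℚ(x) for some 0 ≤ i ≤ n (with f_0 = x). Then the set {m ∈ M₁ : v(m) ≥ 0} equals the ℤ-subalgebra of M₁ generated by the monomials x^{a_0} f_1^{a_1} ⋯ f_n^{a_n} with a_i ≥ 0 (a_j ∈ ℤ arbitrary for j ≠ i). -/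
/-! Every element of `M₁` can be written as `P / ∏ fⱼ ^ bⱼ` with `P ∈ ℤ[x]`. A valuation that is
trivial on `ℚ` and positive on the monic polynomial `fᵢ` is nonnegative on `x` (otherwise the
leading term of `fᵢ` would dominate), hence on all of `ℚ[x]`; by Bézout it is then positive only on
multiples of the irreducible `fᵢ`. So `v fⱼ = 0` for `j ≠ i`, and `v P ≥ k` forces `fᵢ ^ k ∣ P`, in
`ℤ[x]` because `fᵢ` is monic. If `v (P / ∏ fⱼ ^ bⱼ) ≥ 0` then `fᵢ ^ bᵢ ∣ P`, which cancels the
denominator's power of `fᵢ` and leaves a polynomial times monomials with `aᵢ = 0`. -/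

open scoped Classical

/-- The image of an integer polynomial in the field of rational functions `ℚ(x)`. -/
noncomputable def toRF (g : Polynomial ℤ) : RatFunc ℚ :=
  algebraMap (Polynomial ℚ) (RatFunc ℚ) (g.map (Int.castRingHom ℚ))

open Polynomial

namespace AddValuation

theorem map_prod {R Γ₀ ι : Type*} [CommRing R] [LinearOrderedAddCommMonoidWithTop Γ₀]
    (v : AddValuation R Γ₀) (s : Finset ι) (g : ι → R) :
    v (∏ j ∈ s, g j) = ∑ j ∈ s, v (g j) := by
  induction s using Finset.induction_on with
  | empty => simp
  | insert j s hj ih => rw [Finset.prod_insert hj, Finset.sum_insert hj, map_mul, ih]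

section Field

variable {K : Type*} [Field K] (v : AddValuation K (WithTop ℤ))

theorem map_zpow_of_eq_coe {x : K} {t : ℤ} (h : v x = t) (n : ℤ) :
    v (x ^ n) = (n * t : ℤ) := by
  cases n with
  | ofNat k => simp [map_pow, h, ← WithTop.coe_nsmul]
  | negSucc k =>
    rw [zpow_negSucc, map_inv, map_pow, h, ← WithTop.coe_nsmul,
      ← WithTop.LinearOrderedAddCommGroup.coe_neg, Int.negSucc_eq]
    congr 1
    simp only [nsmul_eq_mul]
    push_cast
    ring

variable {ι : Type*} [Fintype ι] {u : ι → K} {i : ι}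

theorem map_prod_zpow (hvi : v (u i) = 1) (hvj : ∀ j ≠ i, v (u j) = 0) (a : ι → ℤ) :
    v (∏ j, u j ^ a j) = a i := by
  rw [map_prod, Fintype.sum_eq_single i fun j hj => by
    simpa using v.map_zpow_of_eq_coe (t := 0) (hvj j hj) (a j)]
  simpa using v.map_zpow_of_eq_coe (t := 1) hvi (a i)

end Field

end AddValuation

theorem Subring.exists_mul_prod_pow_mem_of_mem_closure_prod_zpow {K ι : Type*} [Field K]
    [Fintype ι] (A : Subring K) {u : ι → K} (hu : ∀ j, u j ∈ A) (hu0 : ∀ j, u j ≠ 0) {m : K}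
    (hm : m ∈ Subring.closure (Set.range fun a : ι → ℤ => ∏ j, u j ^ a j)) :
    ∃ b : ι → ℕ, m * ∏ j, u j ^ b j ∈ A := by
  have prod_add (b b' : ι → ℕ) :
      ∏ j, u j ^ (b + b') j = (∏ j, u j ^ b j) * ∏ j, u j ^ b' j := by
    simp only [Pi.add_apply, pow_add, Finset.prod_mul_distrib]
  induction hm using Subring.closure_induction with
  | mem x hx =>
    obtain ⟨a, rfl⟩ := hx
    refine ⟨fun j => (-a j).toNat, ?_⟩
    rw [← Finset.prod_mul_distrib]
    convert A.prod_mem fun j _ => A.pow_mem (hu j) (a j).toNat using 2 with j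
    rw [← zpow_natCast, ← zpow_natCast, ← zpow_add₀ (hu0 j)]
    congr 1
    simp only
    omega
  | zero => exact ⟨0, by simp⟩
  | one => exact ⟨0, by simp⟩
  | add x y _ _ hx hy =>
    obtain ⟨b, hb⟩ := hx
    obtain ⟨b', hb'⟩ := hy
    refine ⟨b + b', ?_⟩
    rw [prod_add]
    convert A.add_mem (A.mul_mem hb (A.prod_mem fun j _ => A.pow_mem (hu j) (b' j)))
      (A.mul_mem hb' (A.prod_mem fun j _ => A.pow_mem (hu j) (b j))) using 1
    ring
  | neg x _ hx =>
    obtain ⟨b, hb⟩ := hx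
    exact ⟨b, by simpa using A.neg_mem hb⟩
  | mul x y _ _ hx hy =>
    obtain ⟨b, hb⟩ := hx
    obtain ⟨b', hb'⟩ := hy
    refine ⟨b + b', ?_⟩
    rw [prod_add]
    convert A.mul_mem hb hb' using 1
    ring

theorem prod_zpow_update_neg_mul_prod_pow {K ι : Type*} [Field K] [Fintype ι] {u : ι → K}
    (hu0 : ∀ j, u j ≠ 0) (i : ι) (b : ι → ℕ) :
    (∏ j, u j ^ Function.update (fun j => -(b j : ℤ)) i 0 j) * ∏ j, u j ^ b j =
      u i ^ b i := by
  simp only [← zpow_natCast, ← Finset.prod_mul_distrib, ← zpow_add₀ (hu0 _)]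
  have (j : ι) :
      Function.update (fun j => -(b j : ℤ)) i 0 j + b j = if j = i then (b i : ℤ) else 0 := by
    by_cases hj : j = i <;> simp [hj]
  simp [this, apply_ite, Finset.prod_ite_eq']

theorem mem_closure_prod_zpow_nonneg_self {K ι : Type*} [Field K] [Fintype ι] (u : ι → K)
    (i j : ι) : u j ∈ Subring.closure
      (Set.range fun a : {a : ι → ℤ // 0 ≤ a i} => ∏ l, u l ^ a.1 l) := by
  refine Subring.subset_closure ⟨⟨(Pi.single j 1 : ι → ℤ), ?_⟩, ?_⟩
  · by_cases h : i = j <;> simp [h]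
  · change ∏ l, u l ^ (Pi.single j 1 : ι → ℤ) l = u j
    rw [Fintype.prod_eq_single j fun l hl => by simp [hl]]
    simp

namespace AddValuation

section Monomials

variable {K : Type*} [Field K] (v : AddValuation K (WithTop ℤ))
variable {ι : Type*} [Fintype ι] {u : ι → K} {i : ι}

theorem setOf_mem_closure_prod_zpow_and_nonneg_eq (A : Subring K) (hu : ∀ j, u j ∈ A)
    (hA : A ≤ Subring.closure
      (Set.range fun a : {a : ι → ℤ // 0 ≤ a i} => ∏ j, u j ^ a.1 j))
    (hvi : v (u i) = 1) (hvj : ∀ j ≠ i, v (u j) = 0)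
    (hdvd : ∀ a ∈ A, ∀ k : ℕ, (k : WithTop ℤ) ≤ v a → ∃ c ∈ A, a = u i ^ k * c) :
    {m | m ∈ Subring.closure (Set.range fun a : ι → ℤ => ∏ j, u j ^ a j) ∧ 0 ≤ v m} =
      (Subring.closure (Set.range
        fun a : {a : ι → ℤ // 0 ≤ a i} => ∏ j, u j ^ a.1 j) : Set K) := by
  ext m
  constructor
  · rintro ⟨hm, hvm⟩
    have hu0 : ∀ j, u j ≠ 0 := fun j => v.ne_top_iff.1 <| by
      by_cases hj : j = i
      · simp [hj, hvi]
      · simp [hvj j hj]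
    obtain ⟨b, hb⟩ := A.exists_mul_prod_pow_mem_of_mem_closure_prod_zpow hu hu0 hm
    have hvb : (b i : WithTop ℤ) ≤ v (m * ∏ j, u j ^ b j) := by
      have hvP : v (∏ j, u j ^ b j) = b i := by
        simpa using v.map_prod_zpow hvi hvj (fun j => (b j : ℤ))
      rw [map_mul, hvP]
      exact le_add_of_nonneg_left hvm
    obtain ⟨c, hcA, hc⟩ := hdvd _ hb (b i) hvb
    have hP : ∏ j, u j ^ b j ≠ 0 := Finset.prod_ne_zero_iff.2 fun j _ => pow_ne_zero _ (hu0 j)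
    have hm_eq : m = c * ∏ j, u j ^ Function.update (fun j => -(b j : ℤ)) i 0 j := by
      apply mul_right_cancel₀ hP
      rw [hc, mul_assoc, prod_zpow_update_neg_mul_prod_pow hu0, mul_comm]
    have ha : 0 ≤ Function.update (fun j => -(b j : ℤ)) i 0 i := by simp
    rw [hm_eq]
    exact mul_mem (hA hcA) (Subring.subset_closure ⟨⟨_, ha⟩, rfl⟩)
  · intro hm
    refine ⟨Subring.closure_mono ?_ hm, ?_⟩
    · rintro _ ⟨a, rfl⟩
      exact ⟨a.1, rfl⟩
    · refine (Subring.closure_le (t := (toValuation v).integer).2 ?_ hm : _)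
      rintro _ ⟨a, rfl⟩
      rw [SetLike.mem_coe, Valuation.mem_integer_iff, toValuation_apply, v.map_prod_zpow hvi hvj]
      rw [← ofAdd_zero, Multiplicative.ofAdd_le]
      exact (WithTop.coe_nonneg.2 a.2 : (0 : WithTop ℤ) ≤ a.1 i)

end Monomials

section Polynomial

variable {k : Type*} [Field k] (w : AddValuation k[X] (WithTop ℤ))

theorem coe_mul_le_map_C_mul_X_pow (hC : ∀ c, c ≠ 0 → w (C c) = 0) {t : ℤ} (hX : w X = t)
    (c : k) (n : ℕ) : ((n * t : ℤ) : WithTop ℤ) ≤ w (C c * X ^ n) := by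
  rcases eq_or_ne c 0 with rfl | hc
  · simp
  · rw [map_mul, map_pow, hC c hc, hX, zero_add, ← WithTop.coe_nsmul, nsmul_eq_mul]

theorem map_eq_natDegree_mul_of_monic (hC : ∀ c, c ≠ 0 → w (C c) = 0) {t : ℤ} (hX : w X = t)
    (ht : t < 0) {p : k[X]} (hp : p.Monic) : w p = (p.natDegree * t : ℤ) := by
  set d := p.natDegree
  have hlead : w (X ^ d) = (d * t : ℤ) := by
    rw [map_pow, hX, ← WithTop.coe_nsmul, nsmul_eq_mul]
  have htail : (((d - 1 : ℤ) * t : ℤ) : WithTop ℤ) ≤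
      w (∑ j ∈ Finset.range d, C (p.coeff j) * X ^ j) := by
    refine w.map_le_sum fun j hj => le_trans ?_ (w.coe_mul_le_map_C_mul_X_pow hC hX _ j)
    have : (j : ℤ) ≤ d - 1 := by have := Finset.mem_range.1 hj; omega
    exact_mod_cast mul_le_mul_of_nonpos_right this ht.le
  have hlt : w (X ^ d) < w (∑ j ∈ Finset.range d, C (p.coeff j) * X ^ j) :=
    hlead ▸ lt_of_lt_of_le (WithTop.coe_lt_coe.2 (by nlinarith)) htail
  rw [hp.as_sum, w.map_add_eq_of_lt_left hlt, hlead]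

theorem map_X_nonneg_of_monic (hC : ∀ c, c ≠ 0 → w (C c) = 0) {p : k[X]} (hp : p.Monic)
    (hwp : 0 < w p) : 0 ≤ w X := by
  by_contra! hneg
  obtain ⟨t, hX⟩ := WithTop.ne_top_iff_exists.1 (hneg.trans_le le_top).ne
  have ht : t < 0 := by rw [← hX] at hneg; exact_mod_cast hneg
  rw [w.map_eq_natDegree_mul_of_monic hC hX.symm ht hp] at hwp
  have : 0 < (p.natDegree : ℤ) * t := by exact_mod_cast hwp
  nlinarith

theorem map_nonneg_of_map_X_nonneg (hC : ∀ c, c ≠ 0 → w (C c) = 0) (hX : 0 ≤ w X)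
    (p : k[X]) : 0 ≤ w p := by
  induction p using Polynomial.induction_on with
  | C c =>
    rcases eq_or_ne c 0 with rfl | hc
    · simp
    · exact (hC c hc).ge
  | add p q hp hq => exact w.map_le_add hp hq
  | monomial n c ih =>
    rw [pow_succ, ← mul_assoc, map_mul]
    exact add_nonneg ih hX

theorem dvd_of_map_pos (hC : ∀ c, c ≠ 0 → w (C c) = 0) (hX : 0 ≤ w X) {g p : k[X]}
    (hg : Irreducible g) (hwg : 0 < w g) (hwp : 0 < w p) : g ∣ p := by
  by_contra hgp
  obtain ⟨a, b, hab⟩ := hg.coprime_iff_not_dvd.2 hgp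
  have hpos : 0 < w (a * g + b * p) := by
    refine w.map_lt_add ?_ ?_ <;> rw [map_mul]
    · exact hwg.trans_le (le_add_of_nonneg_left (w.map_nonneg_of_map_X_nonneg hC hX a))
    · exact hwp.trans_le (le_add_of_nonneg_left (w.map_nonneg_of_map_X_nonneg hC hX b))
  rw [hab, map_one] at hpos
  exact hpos.false

theorem pow_dvd_of_le_map (hC : ∀ c, c ≠ 0 → w (C c) = 0) (hX : 0 ≤ w X) {g : k[X]}
    (hg : Irreducible g) (hwg : w g = 1) (n : ℕ) {p : k[X]} (hp : (n : WithTop ℤ) ≤ w p) :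
    g ^ n ∣ p := by
  induction n generalizing p with
  | zero => simp
  | succ n ih =>
    obtain ⟨q, rfl⟩ := w.dvd_of_map_pos hC hX hg (hwg ▸ zero_lt_one)
      (lt_of_lt_of_le (by exact_mod_cast n.succ_pos) hp)
    rw [map_mul, hwg] at hp
    have hq : (n : WithTop ℤ) ≤ w q := by
      cases hq : w q using WithTop.recTopCoe with
      | top => exact le_top
      | coe s =>
        rw [hq] at hp
        have : ((n : ℤ) + 1) ≤ 1 + s := by exact_mod_cast hp
        exact_mod_cast (by omega : (n : ℤ) ≤ s)
    rw [pow_succ']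
    exact mul_dvd_mul_left g (ih hq)

theorem map_eq_zero_of_irreducible_of_monic (hC : ∀ c, c ≠ 0 → w (C c) = 0) (hX : 0 ≤ w X)
    {g h : k[X]} (hg : Irreducible g) (hgm : g.Monic) (hwg : 0 < w g) (hh : Irreducible h)
    (hhm : h.Monic) (hne : h ≠ g) : w h = 0 := by
  refine le_antisymm (not_lt.1 fun hwh => hne ?_) (w.map_nonneg_of_map_X_nonneg hC hX h)
  exact (eq_of_monic_of_associated hgm hhm
    (hg.associated_of_dvd hh (w.dvd_of_map_pos hC hX hg hwg hwh))).symm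

end Polynomial

end AddValuation

theorem RingHom.range_le_of_map_X_mem {R : Type*} [Ring R] (φ : ℤ[X] →+* R) {S : Subring R}
    (hX : φ X ∈ S) : φ.range ≤ S := by
  rintro _ ⟨P, rfl⟩
  induction P using Polynomial.induction_on with
  | C a =>
    rw [← RingHom.comp_apply, eq_intCast]
    exact intCast_mem S a
  | add p q hp hq => simpa using add_mem hp hq
  | monomial n a ih =>
    rw [pow_succ, ← mul_assoc, map_mul]
    exact mul_mem ih hX

theorem stmt6_general (n : ℕ) (f : Fin (n + 1) → Polynomial ℤ)
    (hf0 : f 0 = Polynomial.X)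
    (hinj : Function.Injective f)
    (hirr : ∀ j, Irreducible (f j))
    (hmonic : ∀ j, (f j).Monic)
    (i : Fin (n + 1))
    (v : RatFunc ℚ → WithTop ℤ)
    (hv0 : v 0 = ⊤)
    (hvQ : ∀ c : ℚ, c ≠ 0 → v (algebraMap ℚ (RatFunc ℚ) c) = 0)
    (hvmul : ∀ a b, v (a * b) = v a + v b)
    (hvadd : ∀ a b, min (v a) (v b) ≤ v (a + b))
    (hvf : v (toRF (f i)) = 1) :
    {m : RatFunc ℚ |
        m ∈ Subring.closure (Set.range fun a : Fin (n + 1) → ℤ => ∏ j, toRF (f j) ^ a j) ∧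
        0 ≤ v m} =
      (Subring.closure (Set.range
        fun a : {a : Fin (n + 1) → ℤ // 0 ≤ a i} => ∏ j, toRF (f j) ^ a.1 j) : Set (RatFunc ℚ)) := by
  let V : AddValuation (RatFunc ℚ) (WithTop ℤ) :=
    AddValuation.of v hv0 (by simpa using hvQ 1 one_ne_zero) hvadd hvmul
  let w := V.comap (algebraMap ℚ[X] (RatFunc ℚ))
  let φ : ℤ[X] →+* RatFunc ℚ :=
    (algebraMap ℚ[X] (RatFunc ℚ)).comp (mapRingHom (Int.castRingHom ℚ))
  let F j := (f j).map (Int.castRingHom ℚ)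
  have hFmonic j : (F j).Monic := (hmonic j).map _
  have hFirr j : Irreducible (F j) := by
    simpa using ((hmonic j).irreducible_iff_irreducible_map_fraction_map (K := ℚ)).1 (hirr j)
  have hC c (hc : c ≠ 0) : w (C c) = 0 := by
    rw [← algebraMap_eq, ← hvQ c hc, IsScalarTower.algebraMap_apply ℚ ℚ[X] (RatFunc ℚ)]
    rfl
  have hwF : w (F i) = 1 := hvf
  have hX : 0 ≤ w X := w.map_X_nonneg_of_monic hC (hFmonic i) (hwF ▸ zero_lt_one)
  refine V.setOf_mem_closure_prod_zpow_and_nonneg_eq φ.range (fun j => ⟨f j, rfl⟩) ?_ hvf ?_ ?_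
  · exact φ.range_le_of_map_X_mem (hf0 ▸ mem_closure_prod_zpow_nonneg_self _ i 0)
  · intro j hj
    exact w.map_eq_zero_of_irreducible_of_monic hC hX (hFirr i) (hFmonic i) (hwF ▸ zero_lt_one)
      (hFirr j) (hFmonic j) fun h => hj (hinj (map_injective _ Int.cast_injective h))
  · rintro _ ⟨P, rfl⟩ k hk
    obtain ⟨Q, rfl⟩ := (map_dvd_map _ Int.cast_injective ((hmonic i).pow k)).1 <| by
      simpa [Polynomial.map_pow] using w.pow_dvd_of_le_map hC hX (hFirr i) hwF k hk
    exact ⟨φ Q, ⟨Q, rfl⟩, by simp [φ, toRF]⟩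

/-- with `M₁ = ℤ[x, x⁻¹, f₁⁻¹, …, fₙ⁻¹] ⊆ ℚ(x)` (the `fⱼ` distinct
irreducible monic non-constant integer polynomials, `f₀ = x`) and `v` the
`fᵢ`-adic valuation on `ℚ(x)`, the set `{m ∈ M₁ : v m ≥ 0}` equals the subring
generated by the monomials `x^{a₀} f₁^{a₁} ⋯ fₙ^{aₙ}` with `aᵢ ≥ 0`. -/
theorem stmt6 (n : ℕ) (f : Fin (n + 1) → Polynomial ℤ)
    (hf0 : f 0 = Polynomial.X)
    (hinj : Function.Injective f)
    (hirr : ∀ j, Irreducible (f j))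
    (hmonic : ∀ j, (f j).Monic)
    (hdeg : ∀ j, 0 < (f j).natDegree)
    (i : Fin (n + 1))
    (v : RatFunc ℚ → WithTop ℤ)
    (hv0 : v 0 = ⊤)
    (hvQ : ∀ c : ℚ, c ≠ 0 → v (algebraMap ℚ (RatFunc ℚ) c) = 0)
    (hvmul : ∀ a b, v (a * b) = v a + v b)
    (hvadd : ∀ a b, min (v a) (v b) ≤ v (a + b))
    (hvf : v (toRF (f i)) = 1) :
    {m : RatFunc ℚ |
        m ∈ Subring.closure (Set.range fun a : Fin (n + 1) → ℤ => ∏ j, toRF (f j) ^ a j) ∧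
        0 ≤ v m} =
      (Subring.closure (Set.range
        fun a : {a : Fin (n + 1) → ℤ // 0 ≤ a i} => ∏ j, toRF (f j) ^ a.1 j) : Set (RatFunc ℚ)) :=
  stmt6_general n f hf0 hinj hirr hmonic i v hv0 hvQ hvmul hvadd hvf
end

section
/- Let B = ⟨q⟩ be an infinite cyclic group acting on the abelian group A = ℤ[x, x^{-1}, f_1^{-1}, ..., f_n^{-1}, 1/k] (k ≥ 2 an integer) with q acting as multiplication by k. Then H^0(B, A) = 0 and H^1(B, A) ≅ (ℤ/(k-1)ℤ)[x, x^{-1}, f_1^{-1}, ..., f_n^{-1}], i.e., H^1(B, A) is the cokernel of multiplication by k - 1 on A, which is A/(k-1)A. -/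
open scoped Classical

/-!
Inside `ℚ(X)`, the ring `A` is generated by `k`, `X`, the `fᵢ` and their inverses, so it is
the localization of `ℤ[X]` at the monoid these elements generate. Localization commutes with
quotients, hence `A/(k-1)A` is the localization of `ℤ[X]/(k-1) = (ℤ/(k-1))[X]` at the image of
that monoid, in which `k` becomes `1`. Multiplication by `k - 1` is injective because `A` is a
domain and `k ≠ 1`.
-/

open Polynomial

section Fractions

variable {R K : Type*} [CommRing R] [Field K] (φ : R →+* K) (M : Submonoid R)

def fractionSubring : Subring K where
  carrier := {x | ∃ r, ∃ m ∈ M, x * φ m = φ r}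
  zero_mem' := ⟨0, 1, one_mem M, by simp⟩
  one_mem' := ⟨1, 1, one_mem M, by simp⟩
  add_mem' := by
    rintro x y ⟨r₁, m₁, hm₁, h₁⟩ ⟨r₂, m₂, hm₂, h₂⟩
    refine ⟨r₁ * m₂ + r₂ * m₁, m₁ * m₂, mul_mem hm₁ hm₂, ?_⟩
    simp only [map_add, map_mul]
    linear_combination φ m₂ * h₁ + φ m₁ * h₂
  mul_mem' := by
    rintro x y ⟨r₁, m₁, hm₁, h₁⟩ ⟨r₂, m₂, hm₂, h₂⟩
    refine ⟨r₁ * r₂, m₁ * m₂, mul_mem hm₁ hm₂, ?_⟩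
    simp only [map_mul]
    linear_combination y * φ m₂ * h₁ + φ r₁ * h₂
  neg_mem' := by
    rintro x ⟨r, m, hm, h⟩
    exact ⟨-r, m, hm, by rw [neg_mul, h, map_neg]⟩

variable {φ M}

theorem zpow_mem_fractionSubring {m : R} (hm : m ∈ M) (hφm : φ m ≠ 0) :
    ∀ z : ℤ, φ m ^ z ∈ fractionSubring φ M
  | .ofNat e => ⟨m ^ e, 1, one_mem M, by simp⟩
  | .negSucc e => ⟨1, m ^ (e + 1), pow_mem hm _, by
      rw [zpow_negSucc, map_pow, map_one, inv_mul_cancel₀ (pow_ne_zero _ hφm)]⟩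

end Fractions

theorem IsLocalization.nonempty_quotient_ringEquiv {R S T : Type*} [CommRing R] [CommRing S]
    [CommRing T] [Algebra R S] (M : Submonoid R) [IsLocalization M S] (p : R →+* T)
    (hp : Function.Surjective p) (I : Ideal S) (hI : I = (RingHom.ker p).map (algebraMap R S)) :
    Nonempty (S ⧸ I ≃+* Localization (M.map p)) := by
  have hker : RingHom.ker p ≤ RingHom.ker ((Ideal.Quotient.mk I).comp (algebraMap R S)) := by
    rw [← RingHom.comap_ker, Ideal.mk_ker, hI]
    exact Ideal.le_comap_map
  let ψ := p.liftOfSurjective hp ⟨_, hker⟩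
  let : Algebra T (S ⧸ I) := ψ.toAlgebra
  have : IsLocalization (M.map p) (S ⧸ I) :=
    IsLocalization.of_surjective M S p hp (Ideal.Quotient.mk I) Ideal.Quotient.mk_surjective
      (p.liftOfRightInverse_comp _ _ ⟨_, hker⟩).symm (by rw [Ideal.mk_ker, hI])
  exact ⟨(IsLocalization.algEquiv (M.map p) (S ⧸ I) (Localization (M.map p))).toRingEquiv⟩

theorem Polynomial.ker_mapRingHom_intCast (m : ℕ) :
    RingHom.ker (mapRingHom (Int.castRingHom (ZMod m))) = Ideal.span {C (m : ℤ)} := by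
  rw [ker_mapRingHom, ZMod.ker_intCastRingHom, Ideal.map_span, Set.image_singleton]

noncomputable def toRFHom : ℤ[X] →+* RatFunc ℚ :=
  (algebraMap ℚ[X] (RatFunc ℚ)).comp (mapRingHom (Int.castRingHom ℚ))

theorem toRFHom_apply (g : ℤ[X]) : toRFHom g = toRF g := rfl

theorem toRFHom_injective : Function.Injective toRFHom :=
  (IsFractionRing.injective ℚ[X] (RatFunc ℚ)).comp (map_injective _ Int.cast_injective)

section LaurentRing

variable {n : ℕ} (k : ℕ) (f : Fin n → ℤ[X])

noncomputable def laurentMonomial (p : ℤ × ℤ × (Fin n → ℤ)) : RatFunc ℚ :=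
  (k : RatFunc ℚ) ^ p.1 * toRF X ^ p.2.1 * ∏ i, toRF (f i) ^ p.2.2 i

noncomputable def laurentRing : Subring (RatFunc ℚ) :=
  Subring.closure (Set.range (laurentMonomial k f))

noncomputable def laurentDenominators : Submonoid ℤ[X] :=
  Submonoid.closure (insert (k : ℤ[X]) (insert X (Set.range f)))

variable {k f}

theorem laurentDenominators_le_nonZeroDivisors (hk : k ≠ 0) (hf : ∀ i, f i ≠ 0) :
    laurentDenominators k f ≤ nonZeroDivisors ℤ[X] := by
  refine Submonoid.closure_le.mpr ?_
  rintro _ (rfl | rfl | ⟨i, rfl⟩) <;> rw [SetLike.mem_coe, mem_nonZeroDivisors_iff_ne_zero]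
  · exact_mod_cast hk
  · exact X_ne_zero
  · exact hf i

theorem toRFHom_ne_zero_of_mem_laurentDenominators (hk : k ≠ 0) (hf : ∀ i, f i ≠ 0)
    {s : ℤ[X]} (hs : s ∈ laurentDenominators k f) : toRFHom s ≠ 0 :=
  (map_ne_zero_iff _ toRFHom_injective).mpr
    (nonZeroDivisors.ne_zero (laurentDenominators_le_nonZeroDivisors hk hf hs))

theorem laurentRing_le_fractionSubring (hk : k ≠ 0) (hf : ∀ i, f i ≠ 0) :
    laurentRing k f ≤ fractionSubring toRFHom (laurentDenominators k f) := by
  have hzpow {s : ℤ[X]} (hs : s ∈ insert (k : ℤ[X]) (insert X (Set.range f))) (z : ℤ) :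
      toRF s ^ z ∈ fractionSubring toRFHom (laurentDenominators k f) :=
    have hmem := Submonoid.subset_closure hs
    zpow_mem_fractionSubring hmem (toRFHom_ne_zero_of_mem_laurentDenominators hk hf hmem) z
  refine Subring.closure_le.mpr ?_
  rintro _ ⟨⟨a, b, e⟩, rfl⟩
  have hk : (k : RatFunc ℚ) = toRF (k : ℤ[X]) := by simp [← toRFHom_apply]
  refine mul_mem (mul_mem ?_ (hzpow (by simp) b)) (prod_mem fun i _ => hzpow (by simp) (e i))
  rw [hk]
  exact hzpow (by simp) a

theorem laurentMonomial_mem_laurentRing (p : ℤ × ℤ × (Fin n → ℤ)) :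
    laurentMonomial k f p ∈ laurentRing k f :=
  Subring.subset_closure ⟨p, rfl⟩

theorem zpow_toRF_mem_laurentRing {s : ℤ[X]}
    (hs : s ∈ insert (k : ℤ[X]) (insert X (Set.range f))) (z : ℤ) :
    toRF s ^ z ∈ laurentRing k f := by
  rcases hs with rfl | rfl | ⟨i, rfl⟩
  · simpa [laurentMonomial, ← toRFHom_apply] using
      laurentMonomial_mem_laurentRing (f := f) (z, 0, 0)
  · simpa [laurentMonomial] using laurentMonomial_mem_laurentRing (k := k) (f := f) (0, z, 0)
  · simpa [laurentMonomial, Pi.single_apply] using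
      laurentMonomial_mem_laurentRing (k := k) (f := f) (0, 0, Pi.single i z)

theorem toRFHom_mem_laurentRing (g : ℤ[X]) : toRFHom g ∈ laurentRing k f := by
  induction g using Polynomial.induction_on' with
  | add p q hp hq => simpa using add_mem hp hq
  | monomial e a =>
    rw [← C_mul_X_pow_eq_monomial, map_mul, map_pow]
    refine mul_mem (by simp [toRFHom]) (pow_mem ?_ e)
    simpa [toRFHom_apply] using zpow_toRF_mem_laurentRing (k := k) (f := f) (by simp) 1

theorem inv_toRFHom_mem_laurentRing {s : ℤ[X]} (hs : s ∈ laurentDenominators k f) :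
    (toRFHom s)⁻¹ ∈ laurentRing k f := by
  induction hs using Submonoid.closure_induction with
  | mem s hs => simpa [toRFHom_apply] using zpow_toRF_mem_laurentRing hs (-1)
  | one => simp
  | mul s t _ _ hs ht => rw [map_mul, mul_inv]; exact mul_mem hs ht

noncomputable instance : Algebra ℤ[X] (laurentRing k f) :=
  (toRFHom.codRestrict _ toRFHom_mem_laurentRing).toAlgebra

theorem isLocalization_laurentRing (hk : k ≠ 0) (hf : ∀ i, f i ≠ 0) :
    IsLocalization (laurentDenominators k f) (laurentRing k f) where
  map_units s := isUnit_iff_exists_inv.mpr ⟨⟨_, inv_toRFHom_mem_laurentRing s.2⟩,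
    Subtype.ext (mul_inv_cancel₀ (toRFHom_ne_zero_of_mem_laurentDenominators hk hf s.2))⟩
  surj x := by
    obtain ⟨g, s, hs, h⟩ := laurentRing_le_fractionSubring hk hf x.2
    exact ⟨(g, ⟨s, hs⟩), Subtype.ext h⟩
  exists_of_eq {g h} hgh := ⟨1, by
    rw [toRFHom_injective (congrArg Subtype.val hgh : toRFHom g = toRFHom h)]⟩

theorem map_laurentDenominators_mapRingHom (hk : k ≠ 0) :
    (laurentDenominators k f).map (mapRingHom (Int.castRingHom (ZMod (k - 1)))) =
      Submonoid.closure
        (insert X (Set.range fun i => (f i).map (Int.castRingHom (ZMod (k - 1))))) := by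
  have hk1 : (k : (ZMod (k - 1))[X]) = 1 := by
    obtain ⟨m, rfl⟩ := Nat.exists_eq_add_one_of_ne_zero hk
    simp
  rw [laurentDenominators, MonoidHom.map_mclosure, Set.image_insert_eq, Set.image_insert_eq,
    ← Set.range_comp]
  simp [hk1, Submonoid.closure_insert_one, Function.comp_def]

end LaurentRing

theorem stmt12_general (n : ℕ) (k : ℕ) (hk : 2 ≤ k)
    (f : Fin n → Polynomial ℤ)
    (hmonic : ∀ i, (f i).Monic)
    (A : Subring (RatFunc ℚ))
    (hA : A = Subring.closure (Set.range
      fun p : ℤ × ℤ × (Fin n → ℤ) =>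
        (k : RatFunc ℚ) ^ p.1 * toRF Polynomial.X ^ p.2.1 * ∏ i, toRF (f i) ^ p.2.2 i)) :
    (∀ a : A, ((k : A) - 1) * a = 0 → a = 0) ∧
    Nonempty ((A ⧸ Ideal.span {((k : A) - 1)}) ≃+*
      Localization (Submonoid.closure
        (insert (Polynomial.X : Polynomial (ZMod (k - 1)))
          (Set.range fun i => (f i).map (Int.castRingHom (ZMod (k - 1))))))) := by
  obtain rfl : A = laurentRing k f := hA
  have hk0 : k ≠ 0 := by omega
  have hloc := isLocalization_laurentRing hk0 fun i => (hmonic i).ne_zero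
  have hk1 : (k : laurentRing k f) - 1 ≠ 0 := fun h => by
    have : (k : RatFunc ℚ) - 1 = 0 := congrArg Subtype.val h
    rw [sub_eq_zero, Nat.cast_eq_one] at this
    omega
  refine ⟨fun a h => (mul_eq_zero.mp h).resolve_left hk1, ?_⟩
  have hI : Ideal.span {(k : laurentRing k f) - 1} =
      (RingHom.ker (mapRingHom (Int.castRingHom (ZMod (k - 1))))).map
        (algebraMap ℤ[X] (laurentRing k f)) := by
    rw [ker_mapRingHom_intCast, Ideal.map_span, Set.image_singleton]
    congr
    ext
    simp [Nat.cast_sub (by omega : 1 ≤ k)]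
  rw [← map_laurentDenominators_mapRingHom hk0]
  exact IsLocalization.nonempty_quotient_ringEquiv _ _
    (map_surjective _ ZMod.intCast_surjective) _ hI

/-- for `B = ⟨q⟩` infinite cyclic acting on
`A = ℤ[x, x⁻¹, f₁⁻¹, …, fₙ⁻¹, 1/k]` with `q` acting as multiplication by `k ≥ 2`,
one has `H⁰(B, A) = ker(k-1 : A → A) = 0` and
`H¹(B, A) = A/(k-1)A ≅ (ℤ/(k-1)ℤ)[x, x⁻¹, f₁⁻¹, …, fₙ⁻¹]`. -/
theorem stmt12 (n : ℕ) (k : ℕ) (hk : 2 ≤ k)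
    (f : Fin n → Polynomial ℤ)
    (hirr : ∀ i, Irreducible (f i))
    (hmonic : ∀ i, (f i).Monic)
    (hdeg : ∀ i, 0 < (f i).natDegree)
    (A : Subring (RatFunc ℚ))
    (hA : A = Subring.closure (Set.range
      fun p : ℤ × ℤ × (Fin n → ℤ) =>
        (k : RatFunc ℚ) ^ p.1 * toRF Polynomial.X ^ p.2.1 * ∏ i, toRF (f i) ^ p.2.2 i)) :
    (∀ a : A, ((k : A) - 1) * a = 0 → a = 0) ∧
    Nonempty ((A ⧸ Ideal.span {((k : A) - 1)}) ≃+*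
      Localization (Submonoid.closure
        (insert (Polynomial.X : Polynomial (ZMod (k - 1)))
          (Set.range fun i => (f i).map (Int.castRingHom (ZMod (k - 1))))))) :=
  stmt12_general n k hk f hmonic A hA
end
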